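/- arXiv:2108.01781 — 2 statements merged into one kernel-verified Lean document; each statement's English description precedes it below -/
import Mathlib

section
/- For the impulse dynamics solution δv = −M⁻¹Jᵀ(J M⁻¹ Jᵀ)⁻¹ J v, the post-impact kinetic energy is at most the pre-impact kinetic energy: (v+δv)ᵀ M (v+δv) ≤ vᵀ M v. -/
/-!
Write `u = v + δv` for the post-impact velocity. The impulse `M δv = Jᵀ Λ` is `M`-orthogonal to
every velocity admissible for the constraint, in particular to `u` (since `J u = 0`):
`uᵀ M δv = (J u)ᵀ Λ = 0`. Hence `vᵀ M v = uᵀ M u + δvᵀ M δv ≥ uᵀ M u` (Pythagoras for the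
kinetic-energy inner product). The explicit formula for `δv` solves these two equations as soon
as the Delassus matrix `J M⁻¹ Jᵀ` is invertible, which holds because it is positive definite when
`J` has full row rank.
-/

open Matrix

namespace Matrix

variable {m n : Type*} [Fintype m] [Fintype n]

theorem linearIndependent_row_of_rank_eq_card {K : Type*} [Field K] {J : Matrix m n K}
    (hJ : J.rank = Fintype.card m) : LinearIndependent K J.row := by
  rw [linearIndependent_iff_card_eq_finrank_span, Set.finrank, ← J.rank_eq_finrank_span_row, hJ]

theorem PosDef.mul_inv_mul_transpose [DecidableEq n] {M : Matrix n n ℝ} (hM : M.PosDef)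
    {J : Matrix m n ℝ} (hJ : LinearIndependent ℝ J.row) : (J * M⁻¹ * Jᵀ).PosDef := by
  simpa only [conjTranspose_eq_transpose_of_trivial] using
    hM.inv.mul_mul_conjTranspose_same (vecMul_injective_iff.mpr hJ)

section ImpulseSolution

variable {R : Type*} [CommRing R] [DecidableEq m] [DecidableEq n]
  {M : Matrix n n R} {J : Matrix m n R}

theorem mulVec_impulse_eq (hM : IsUnit M.det) (v : n → R) :
    M *ᵥ -((M⁻¹ * Jᵀ * (J * M⁻¹ * Jᵀ)⁻¹ * J) *ᵥ v) =
      Jᵀ *ᵥ -((J * M⁻¹ * Jᵀ)⁻¹ *ᵥ (J *ᵥ v)) := by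
  simp only [mulVec_neg, mulVec_mulVec, ← Matrix.mul_assoc, mul_nonsing_inv M hM, Matrix.one_mul]

theorem mulVec_add_impulse_eq_zero (hS : IsUnit (J * M⁻¹ * Jᵀ).det) (v : n → R) :
    J *ᵥ (v + -((M⁻¹ * Jᵀ * (J * M⁻¹ * Jᵀ)⁻¹ * J) *ᵥ v)) = 0 := by
  rw [mulVec_add, mulVec_neg, mulVec_mulVec, ← Matrix.mul_assoc, ← Matrix.mul_assoc,
    ← Matrix.mul_assoc, mul_nonsing_inv _ hS, Matrix.one_mul, add_neg_cancel]

end ImpulseSolution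

theorem PosSemidef.dotProduct_mulVec_add_le_of_impulse {M : Matrix n n ℝ} (hM : M.PosSemidef)
    {J : Matrix m n ℝ} {v δv : n → ℝ} {Λ : m → ℝ} (himpulse : M *ᵥ δv = Jᵀ *ᵥ Λ)
    (hconstraint : J *ᵥ (v + δv) = 0) :
    (v + δv) ⬝ᵥ (M *ᵥ (v + δv)) ≤ v ⬝ᵥ (M *ᵥ v) := by
  set u := v + δv
  have horth : u ⬝ᵥ (M *ᵥ δv) = 0 := by
    rw [himpulse, dotProduct_mulVec, vecMul_transpose, hconstraint, zero_dotProduct]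
  have hsymm : δv ⬝ᵥ (M *ᵥ u) = u ⬝ᵥ (M *ᵥ δv) := by
    rw [dotProduct_mulVec, ← mulVec_transpose, ← conjTranspose_eq_transpose_of_trivial,
      hM.isHermitian.eq, dotProduct_comm]
  have hδv : 0 ≤ δv ⬝ᵥ (M *ᵥ δv) := by simpa using hM.dotProduct_mulVec_nonneg δv
  have hv : v = u - δv := by simp [u]
  rw [hv]
  simp only [mulVec_sub, dotProduct_sub, sub_dotProduct, hsymm, horth]
  linarith

end Matrix

theorem impulse_dynamics_energy_dissipation (n m : ℕ)
    (M : Matrix (Fin n) (Fin n) ℝ) (hM : M.PosDef)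
    (J : Matrix (Fin m) (Fin n) ℝ) (hJ : J.rank = m)
    (v : Fin n → ℝ) :
    let δv := -((M⁻¹ * Jᵀ * (J * M⁻¹ * Jᵀ)⁻¹ * J) *ᵥ v)
    (v + δv) ⬝ᵥ (M *ᵥ (v + δv)) ≤ v ⬝ᵥ (M *ᵥ v) := by
  intro δv
  have hrows : LinearIndependent ℝ J.row :=
    linearIndependent_row_of_rank_eq_card (by rw [hJ, Fintype.card_fin])
  have hS : IsUnit (J * M⁻¹ * Jᵀ).det := (hM.mul_inv_mul_transpose hrows).det_pos.ne'.isUnit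
  exact hM.posSemidef.dotProduct_mulVec_add_le_of_impulse
    (mulVec_impulse_eq hM.det_pos.ne'.isUnit v) (mulVec_add_impulse_eq_zero hS v)
end

section
/- A single Newton step on the lifted system G(x,y) = (y − f(x), h(y)) from a consistent point (x₀, f(x₀)) produces the same x-update as a Newton step on the reduced equation h(f(x)) = 0 from x₀, assuming the Jacobian Dh(f(x₀))·Df(x₀) is invertible (with n = k and m arbitrary). -/
theorem lifted_newton_step_equivalence (n m : ℕ)
    (f : (Fin n → ℝ) → (Fin m → ℝ)) (h : (Fin m → ℝ) → (Fin n → ℝ))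
    (hf : ContDiff ℝ 1 f) (hh : ContDiff ℝ 1 h)
    (x₀ Δx Δx' : Fin n → ℝ) (Δy : Fin m → ℝ)
    (hinv : Function.Bijective
      ((fderiv ℝ h (f x₀)).comp (fderiv ℝ f x₀)))
    (hlift1 : Δy - fderiv ℝ f x₀ Δx = 0)
    (hlift2 : fderiv ℝ h (f x₀) Δy = -(h (f x₀)))
    (hred : fderiv ℝ h (f x₀) (fderiv ℝ f x₀ Δx') = -(h (f x₀))) :
    Δx = Δx' := by
  have hΔy : Δy = fderiv ℝ f x₀ Δx := by
    have := sub_eq_zero.mp hlift1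
    exact this
  apply hinv.injective
  simp only [ContinuousLinearMap.comp_apply]
  rw [← hΔy, hlift2, hred]
end
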